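/- arXiv:math/0503110 — 3 statements merged into one kernel-verified Lean document; each statement's English description precedes it below -/
import Mathlib

section
/- Let φ₁,...,φₙ be orthonormal in L²(μ) and K(x,y) = ∑_{k=1}^{n} φₖ(x)·conj(φₖ(y)). Then for x₁,...,x_{n-1}, ∫_Λ det(K(xᵢ,xⱼ))_{1≤i,j≤n} dμ(xₙ) = det(K(xᵢ,xⱼ))_{1≤i,j≤n-1}. -/
open MeasureTheory
open Matrix

section CB
open Finset Matrix Equiv

theorem cauchyBinet' {R : Type*} [CommRing R] {n : ℕ}
    (B : Matrix (Fin n) (Fin (n+1)) R) (C : Matrix (Fin (n+1)) (Fin n) R) :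
    (B * C).det = ∑ k : Fin (n+1),
      (B.submatrix id k.succAbove).det * (C.submatrix k.succAbove id).det := by
  have key : ∀ p : Fin n → Fin (n+1),
      (∑ σ : Perm (Fin n), Perm.sign σ • ∏ i, B (σ i) (p i) * C (p i) i)
        = (∏ i, C (p i) i) * (Matrix.of fun i j => B i (p j)).det := by
    intro p
    rw [Matrix.det_apply', Finset.mul_sum]
    refine Finset.sum_congr rfl fun σ _ => ?_
    simp only [Matrix.of_apply, Finset.prod_mul_distrib, Units.smul_def, zsmul_eq_mul]
    ring
  calc (B * C).det
      = ∑ p : Fin n → Fin (n+1), ∑ σ : Perm (Fin n),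
          Perm.sign σ • ∏ i, B (σ i) (p i) * C (p i) i := by
        rw [Matrix.det_apply]
        simp only [Matrix.mul_apply, Finset.prod_univ_sum, Finset.smul_sum,
          Fintype.piFinset_univ]
        rw [Finset.sum_comm]
    _ = ∑ p : Fin n → Fin (n+1),
          (∏ i, C (p i) i) * (Matrix.of fun i j => B i (p j)).det :=
        Finset.sum_congr rfl fun p _ => key p
    _ = ∑ p ∈ Finset.univ.filter (fun p : Fin n → Fin (n+1) => Function.Injective p),
          (∏ i, C (p i) i) * (Matrix.of fun i j => B i (p j)).det := by
        refine (Finset.sum_subset (Finset.filter_subset _ _) fun p _ hp => ?_).symm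
        simp only [Finset.mem_filter, Finset.mem_univ, true_and] at hp
        rw [Function.not_injective_iff] at hp
        obtain ⟨a, b, hab, hne⟩ := hp
        rw [Matrix.det_zero_of_column_eq hne (fun i => by simp [hab]), mul_zero]
    _ = ∑ q : Fin (n+1) × Perm (Fin n),
          (∏ i, C (q.1.succAbove (q.2 i)) i)
            * (Matrix.of fun i j => B i (q.1.succAbove (q.2 j))).det := by
        refine (Finset.sum_bij (fun q _ => q.1.succAbove ∘ q.2) ?_ ?_ ?_ ?_).symm
        · intro q _
          simp only [Finset.mem_filter, Finset.mem_univ, true_and]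
          exact (Fin.succAbove_right_injective).comp q.2.injective
        · intro q _ q' _ h
          replace h : q.1.succAbove ∘ ⇑q.2 = q'.1.succAbove ∘ ⇑q'.2 := h
          have h1 : q.1 = q'.1 := by
            by_contra hne
            obtain ⟨m, hm⟩ := Fin.exists_succAbove_eq (x := q.1) (y := q'.1) hne
            have : (q.1.succAbove ∘ q.2) (q'.2.symm m) = q.1 := by
              rw [h]; simp only [Function.comp_apply, Equiv.apply_symm_apply]; exact hm
            exact Fin.succAbove_ne _ _ this
          have h2 : q.2 = q'.2 := by
            ext m
            have hm : (q.1.succAbove ∘ q.2) m = (q'.1.succAbove ∘ q'.2) m := by rw [h]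
            rw [Function.comp_apply, Function.comp_apply, ← h1] at hm
            exact congrArg Fin.val (Fin.succAbove_right_injective hm)
          exact Prod.ext h1 h2
        · intro p hp
          simp only [Finset.mem_filter, Finset.mem_univ, true_and] at hp
          have hcard : (Finset.univ.image p).card = n := by
            rw [Finset.card_image_of_injective _ hp, Finset.card_univ, Fintype.card_fin]
          obtain ⟨k, hk⟩ : ∃ k, k ∉ Finset.univ.image p := by
            by_contra h
            push_neg at h
            have := Finset.eq_univ_of_forall h
            rw [this, Finset.card_univ, Fintype.card_fin] at hcard
            omega
          have hpk : ∀ i, p i ≠ k := fun i hi =>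
            hk (hi ▸ Finset.mem_image_of_mem p (Finset.mem_univ i))
          have hex : ∀ i, ∃ z, k.succAbove z = p i := fun i =>
            Fin.exists_succAbove_eq (hpk i)
          have hg : Function.Injective (fun i => (hex i).choose) := by
            intro a b hab
            apply hp
            rw [← (hex a).choose_spec, ← (hex b).choose_spec]
            simp only at hab
            rw [hab]
          refine ⟨(k, Equiv.ofBijective _ (Finite.injective_iff_bijective.mp hg)),
            Finset.mem_univ _, ?_⟩
          funext i
          exact (hex i).choose_spec
        · intro q _
          simp [Function.comp]
    _ = ∑ k : Fin (n+1), ∑ π : Perm (Fin n),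
          (∏ i, C (k.succAbove (π i)) i)
            * ((Perm.sign π : ℤ) * (B.submatrix id k.succAbove).det) := by
        rw [Fintype.sum_prod_type]
        refine Finset.sum_congr rfl fun k _ => Finset.sum_congr rfl fun π _ => ?_
        congr 1
        rw [show (Matrix.of fun i j => B i (k.succAbove (π j)))
            = (B.submatrix id k.succAbove).submatrix id π from rfl,
          Matrix.det_permute']
    _ = ∑ k : Fin (n+1),
        (B.submatrix id k.succAbove).det * (C.submatrix k.succAbove id).det := by
        refine Finset.sum_congr rfl fun k _ => ?_
        rw [Matrix.det_apply' (C.submatrix k.succAbove id), Finset.mul_sum]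
        refine Finset.sum_congr rfl fun π _ => ?_
        simp only [Matrix.submatrix_apply, id]
        ring
end CB

/-- Integrating out the last variable of the `(n+1)×(n+1)` determinantal density
built from an orthonormal family `φ₀,…,φₙ` yields the `n×n` determinant. -/
theorem integral_det_orthonormal_kernel_last_var {Λ : Type*} [MeasurableSpace Λ]
    (μ : Measure Λ) (n : ℕ) (φ : Fin (n + 1) → Λ → ℂ)
    (hmeas : ∀ k, Measurable (φ k))
    (hL2 : ∀ k, MemLp (φ k) 2 μ)
    (horth : ∀ k l, ∫ x, φ k x * (starRingEnd ℂ) (φ l x) ∂μ =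
      if k = l then 1 else 0)
    (x : Fin n → Λ) :
    ∫ y : Λ,
        (Matrix.of fun i j : Fin (n + 1) =>
          ∑ k, φ k ((Fin.snoc x y : Fin (n + 1) → Λ) i) * (starRingEnd ℂ) (φ k ((Fin.snoc x y : Fin (n + 1) → Λ) j))).det
        ∂μ =
      (Matrix.of fun i j : Fin n =>
        ∑ k, φ k (x i) * (starRingEnd ℂ) (φ k (x j))).det := by
  set B : Matrix (Fin n) (Fin (n+1)) ℂ := Matrix.of fun i k => φ k (x i) with hB
  set d : Fin (n+1) → ℂ := fun k => (B.submatrix id k.succAbove).det with hd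
  set a : Fin (n+1) → ℂ := fun k => (-1 : ℂ) ^ (n + (k : ℕ)) * d k with ha
  -- pointwise identity for the integrand
  have hpoint : ∀ y : Λ,
      (Matrix.of fun i j : Fin (n + 1) =>
          ∑ k, φ k ((Fin.snoc x y : Fin (n + 1) → Λ) i)
            * (starRingEnd ℂ) (φ k ((Fin.snoc x y : Fin (n + 1) → Λ) j))).det
        = ∑ j : Fin (n+1), ∑ l : Fin (n+1),
            (a j * (starRingEnd ℂ) (a l)) * (φ j y * (starRingEnd ℂ) (φ l y)) := by
    intro y
    set A : Matrix (Fin (n+1)) (Fin (n+1)) ℂ :=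
      Matrix.of fun i k => φ k ((Fin.snoc x y : Fin (n + 1) → Λ) i) with hA
    have hM : (Matrix.of fun i j : Fin (n + 1) =>
        ∑ k, φ k ((Fin.snoc x y : Fin (n + 1) → Λ) i)
          * (starRingEnd ℂ) (φ k ((Fin.snoc x y : Fin (n + 1) → Λ) j))) = A * Aᴴ := by
      ext i j
      simp only [hA, Matrix.mul_apply, Matrix.conjTranspose_apply, Matrix.of_apply,
        starRingEnd_apply]
    have hdetA : A.det = ∑ k, a k * φ k y := by
      rw [Matrix.det_succ_row A (Fin.last n)]
      refine Finset.sum_congr rfl fun j _ => ?_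
      have hsub : A.submatrix (Fin.last n).succAbove j.succAbove
          = B.submatrix id j.succAbove := by
        ext i i'
        simp [hA, hB, Fin.succAbove_last, Fin.snoc_castSucc]
      rw [hsub]
      simp only [hA, Matrix.of_apply, Fin.snoc_last, ha, Fin.val_last, ← hd]
      ring
    rw [hM, Matrix.det_mul, Matrix.det_conjTranspose, ← starRingEnd_apply, hdetA,
      map_sum, Finset.sum_mul_sum]
    refine Finset.sum_congr rfl fun j _ => Finset.sum_congr rfl fun l _ => ?_
    rw [_root_.map_mul]
    ring
  -- integrability
  have hstar : ∀ l, MemLp (fun y => (starRingEnd ℂ) (φ l y)) 2 μ := fun l =>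
    ⟨RCLike.continuous_conj.comp_aestronglyMeasurable (hL2 l).1, by
      rw [eLpNorm_congr_norm_ae (Filter.Eventually.of_forall fun y => RCLike.norm_conj _)]
      exact (hL2 l).2⟩
  have hint : ∀ j l, Integrable (fun y => φ j y * (starRingEnd ℂ) (φ l y)) μ := by
    intro j l
    have h2 : MemLp (φ j • fun y => (starRingEnd ℂ) (φ l y)) 1 μ :=
      (hstar l).smul (hL2 j) (hpqr := ⟨by rw [inv_one, ENNReal.inv_two_add_inv_two]⟩)
    rw [← memLp_one_iff_integrable]
    exact h2
  -- compute the integral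
  have hLHS : (∫ y : Λ,
      (Matrix.of fun i j : Fin (n + 1) =>
        ∑ k, φ k ((Fin.snoc x y : Fin (n + 1) → Λ) i)
          * (starRingEnd ℂ) (φ k ((Fin.snoc x y : Fin (n + 1) → Λ) j))).det ∂μ)
      = ∑ j : Fin (n+1), a j * (starRingEnd ℂ) (a j) := by
    simp_rw [hpoint]
    rw [integral_finset_sum _ fun j _ =>
      integrable_finset_sum _ fun l _ => ((hint j l).const_mul _)]
    refine Finset.sum_congr rfl fun j _ => ?_
    rw [integral_finset_sum _ fun l _ => ((hint j l).const_mul _)]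
    simp_rw [integral_const_mul, horth]
    rw [Finset.sum_eq_single_of_mem j (Finset.mem_univ j)
      (fun l _ hl => by rw [if_neg (Ne.symm hl), mul_zero]), if_pos rfl, mul_one]
  rw [hLHS]
  -- compute the RHS
  have hRHS : (Matrix.of fun i j : Fin n =>
      ∑ k, φ k (x i) * (starRingEnd ℂ) (φ k (x j))).det
      = ∑ k : Fin (n+1), d k * (starRingEnd ℂ) (d k) := by
    have hN : (Matrix.of fun i j : Fin n =>
        ∑ k, φ k (x i) * (starRingEnd ℂ) (φ k (x j))) = B * Bᴴ := by
      ext i j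
      simp only [hB, Matrix.mul_apply, Matrix.conjTranspose_apply, Matrix.of_apply,
        starRingEnd_apply]
    rw [hN, cauchyBinet']
    refine Finset.sum_congr rfl fun k _ => ?_
    have : Bᴴ.submatrix k.succAbove id = (B.submatrix id k.succAbove)ᴴ := by
      ext i j; rfl
    rw [this, Matrix.det_conjTranspose, ← starRingEnd_apply]
  rw [hRHS]
  refine Finset.sum_congr rfl fun j _ => ?_
  simp only [ha, _root_.map_mul, map_pow, map_neg, _root_.map_one]
  have hpow : ((-1 : ℂ) ^ (n + (j : ℕ))) * ((-1 : ℂ) ^ (n + (j : ℕ))) = 1 := by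
    rw [← pow_add]
    exact Even.neg_one_pow ⟨n + (j : ℕ), rfl⟩
  calc (-1 : ℂ) ^ (n + (j : ℕ)) * d j * ((-1 : ℂ) ^ (n + (j : ℕ)) * (starRingEnd ℂ) (d j))
      = ((-1 : ℂ) ^ (n + (j : ℕ)) * (-1 : ℂ) ^ (n + (j : ℕ))) * (d j * (starRingEnd ℂ) (d j)) := by ring
    _ = d j * (starRingEnd ℂ) (d j) := by rw [hpow, one_mul]
end

section
/- Let λ₁,...,λₙ ∈ [0,1], let φ₁,...,φₙ be functions on a set Λ, and let I₁,...,Iₙ be independent Bernoulli random variables with P(Iₖ=1)=λₖ. Define K_I(x,y) = ∑ₖ Iₖ·φₖ(x)·conj(φₖ(y)) and K(x,y) = ∑ₖ λₖ·φₖ(x)·conj(φₖ(y)). Then for any m and any x₁,...,xₘ ∈ Λ, E[det(K_I(xᵢ,xⱼ))_{1≤i,j≤m}] = det(K(xᵢ,xⱼ))_{1≤i,j≤m}. -/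
open MeasureTheory ProbabilityTheory

/-- Averaging over independent Bernoulli variables `Iₖ` with means `λₖ`:
`E[det (K_I(xᵢ,xⱼ))] = det (K(xᵢ,xⱼ))` where
`K_I(x,y) = ∑ₖ Iₖ φₖ(x) conj(φₖ(y))` and `K(x,y) = ∑ₖ λₖ φₖ(x) conj(φₖ(y))`. -/
theorem expected_det_bernoulli_kernel {Λ Ω : Type*} [MeasurableSpace Ω]
    (μ : Measure Ω) [IsProbabilityMeasure μ] (n : ℕ)
    (lam : Fin n → ℝ) (hlam : ∀ k, lam k ∈ Set.Icc (0 : ℝ) 1)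
    (I : Fin n → Ω → ℝ)
    (hmeas : ∀ k, Measurable (I k))
    (hval : ∀ k ω, I k ω = 0 ∨ I k ω = 1)
    (hindep : iIndepFun I μ)
    (hmean : ∀ k, ∫ ω, I k ω ∂μ = lam k)
    (φ : Fin n → Λ → ℂ) (m : ℕ) (x : Fin m → Λ) :
    ∫ ω, (Matrix.of fun i j : Fin m =>
        ∑ k, (I k ω : ℂ) * φ k (x i) * (starRingEnd ℂ) (φ k (x j))).det ∂μ =
      (Matrix.of fun i j : Fin m =>
        ∑ k, (lam k : ℂ) * φ k (x i) * (starRingEnd ℂ) (φ k (x j))).det := by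
  classical
  set v : Fin n → Fin m → ℂ := fun k j => (starRingEnd ℂ) (φ k (x j)) with hv
  -- basic facts about products of the Bernoulli variables
  have hprod_mem : ∀ (s : Finset (Fin n)) (ω : Ω),
      (∏ k ∈ s, I k ω) = 0 ∨ (∏ k ∈ s, I k ω) = 1 := by
    intro s ω
    induction s using Finset.cons_induction with
    | empty => simp
    | cons j s hj ih =>
      rw [Finset.prod_cons]
      rcases hval j ω with h | h <;> rcases ih with h' | h' <;> simp [h, h']
  have hint : ∀ s : Finset (Fin n), Integrable (fun ω => ∏ k ∈ s, I k ω) μ := by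
    intro s
    refine Integrable.mono' (integrable_const (1 : ℝ))
      ((Finset.measurable_prod s fun k _ => hmeas k).aestronglyMeasurable) ?_
    filter_upwards with ω
    rcases hprod_mem s ω with h | h <;> simp [h]
  -- expectation of a product over a finset
  have hprod_int : ∀ s : Finset (Fin n),
      ∫ ω, ∏ k ∈ s, I k ω ∂μ = ∏ k ∈ s, lam k := by
    intro s
    induction s using Finset.cons_induction with
    | empty => simp
    | cons j s hj ih =>
      have hIndep : IndepFun (∏ k ∈ s, I k) (I j) μ :=
        hindep.indepFun_finsetProd_of_notMem hmeas hj
      have heq : ∫ ω, ∏ k ∈ Finset.cons j s hj, I k ω ∂μ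
          = integral μ ((∏ k ∈ s, I k) * I j) := by
        congr 1
        funext ω
        rw [Finset.prod_cons]
        simp only [Pi.mul_apply, Finset.prod_apply]
        ring
      rw [heq,
        hIndep.integral_mul_eq_mul_integral (by simpa [Finset.prod_fn] using (hint s).aestronglyMeasurable)
          (Integrable.aestronglyMeasurable <| by
            refine Integrable.mono' (integrable_const (1 : ℝ))
              (hmeas j).aestronglyMeasurable ?_
            filter_upwards with ω
            rcases hval j ω with h | h <;> simp [h])]
      have : integral μ (∏ k ∈ s, I k) = ∏ k ∈ s, lam k := by
        rw [← ih]; congr 1; funext ω; simp [Finset.prod_apply]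
      rw [this, Finset.prod_cons, hmean j, mul_comm]
  -- multilinear expansion of the determinant
  have expand : ∀ c : Fin n → ℂ,
      (Matrix.of fun i j : Fin m =>
          ∑ k, c k * φ k (x i) * (starRingEnd ℂ) (φ k (x j))).det
        = ∑ r : Fin m → Fin n, (∏ i, c (r i) * φ (r i) (x i)) •
            Matrix.detRowAlternating (fun i => v (r i)) := by
    intro c
    have h1 : (Matrix.of fun i j : Fin m =>
        ∑ k, c k * φ k (x i) * (starRingEnd ℂ) (φ k (x j)))
        = fun i : Fin m => ∑ k, (c k * φ k (x i)) • v k := by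
      funext i j
      simp [v, Finset.sum_apply, smul_eq_mul, mul_assoc]
    show Matrix.detRowAlternating _ = _
    rw [h1]
    calc Matrix.detRowAlternating (fun i : Fin m => ∑ k, (c k * φ k (x i)) • v k)
        = ∑ r : Fin m → Fin n,
            (Matrix.detRowAlternating (R := ℂ) (n := Fin m)).toMultilinearMap
              (fun i => (c (r i) * φ (r i) (x i)) • v (r i)) :=
          (Matrix.detRowAlternating (R := ℂ) (n := Fin m)).toMultilinearMap.map_sum
            (g := fun (i : Fin m) (k : Fin n) => (c k * φ k (x i)) • v k)
      _ = ∑ r : Fin m → Fin n, (∏ i, c (r i) * φ (r i) (x i)) •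
            Matrix.detRowAlternating (fun i => v (r i)) :=
          Finset.sum_congr rfl fun r _ =>
            (Matrix.detRowAlternating (R := ℂ) (n := Fin m)).toMultilinearMap.map_smul_univ
              (fun i => c (r i) * φ (r i) (x i)) (fun i => v (r i))
  -- integrate term by term
  rw [expand fun k => (lam k : ℂ)]
  have hLHS : (fun ω => (Matrix.of fun i j : Fin m =>
      ∑ k, (I k ω : ℂ) * φ k (x i) * (starRingEnd ℂ) (φ k (x j))).det)
      = fun ω => ∑ r : Fin m → Fin n, (∏ i, (I (r i) ω : ℂ) * φ (r i) (x i)) •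
          Matrix.detRowAlternating (fun i => v (r i)) := by
    funext ω; exact expand fun k => (I k ω : ℂ)
  rw [hLHS]
  have hterm_int : ∀ r : Fin m → Fin n,
      Integrable (fun ω => (∏ i, (I (r i) ω : ℂ) * φ (r i) (x i)) •
        Matrix.detRowAlternating (fun i => v (r i))) μ := by
    intro r
    have : (fun ω => (∏ i, (I (r i) ω : ℂ) * φ (r i) (x i)) •
        Matrix.detRowAlternating (fun i => v (r i)))
        = fun ω => ((∏ i, (I (r i) ω : ℝ) : ℝ) : ℂ) *
          ((∏ i, φ (r i) (x i)) * Matrix.detRowAlternating (fun i => v (r i))) := by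
      funext ω
      simp only [smul_eq_mul]
      push_cast
      rw [Finset.prod_mul_distrib]
      ring
    rw [this]
    have hbase : Integrable (fun ω => ∏ i, I (r i) ω) μ := by
      refine Integrable.mono' (integrable_const (1 : ℝ))
        ((Finset.measurable_prod Finset.univ fun i _ => hmeas (r i)).aestronglyMeasurable) ?_
      filter_upwards with ω
      have : ∀ i ∈ Finset.univ, I (r i) ω = 0 ∨ I (r i) ω = 1 := fun i _ => hval (r i) ω
      have h01 : (∏ i, I (r i) ω) = 0 ∨ (∏ i, I (r i) ω) = 1 := by
        induction (Finset.univ : Finset (Fin m)) using Finset.cons_induction with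
        | empty => simp
        | cons j s hj ih =>
          rw [Finset.prod_cons]
          rcases hval (r j) ω with h | h <;> rcases ih with h' | h' <;> simp [h, h']
      rcases h01 with h | h <;> simp [h]
    exact ((hbase.ofReal (𝕜 := ℂ)).mul_const _)
  rw [integral_finset_sum _ fun r _ => hterm_int r]
  refine Finset.sum_congr rfl fun r _ => ?_
  by_cases hr : Function.Injective r
  · -- injective case: use independence
    have hcast : ∀ ω, (∏ i, (I (r i) ω : ℂ) * φ (r i) (x i)) •
        Matrix.detRowAlternating (fun i => v (r i))
        = ((∏ i, I (r i) ω : ℝ) : ℂ) *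
          ((∏ i, φ (r i) (x i)) * Matrix.detRowAlternating (fun i => v (r i))) := by
      intro ω
      simp only [smul_eq_mul]
      push_cast
      rw [Finset.prod_mul_distrib]
      ring
    simp_rw [hcast]
    rw [integral_mul_const]
    have hIre : ∫ ω, ((∏ i, I (r i) ω : ℝ) : ℂ) ∂μ
        = ((∫ ω, ∏ i, I (r i) ω ∂μ : ℝ) : ℂ) := by
      exact integral_ofReal (𝕜 := ℂ) (f := fun ω => ∏ i, I (r i) ω)
    rw [hIre]
    have : ∫ ω, ∏ i, I (r i) ω ∂μ = ∏ i, lam (r i) := by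
      have himg : ∀ g : Fin n → ℝ, (∏ k ∈ Finset.univ.image r, g k) = ∏ i, g (r i) :=
        fun g => Finset.prod_image (fun a _ b _ h => hr h)
      calc ∫ ω, ∏ i, I (r i) ω ∂μ
          = ∫ ω, ∏ k ∈ Finset.univ.image r, I k ω ∂μ := by
            congr 1; funext ω; exact (himg fun k => I k ω).symm
        _ = ∏ k ∈ Finset.univ.image r, lam k := hprod_int _
        _ = ∏ i, lam (r i) := himg lam
    rw [this]
    simp only [smul_eq_mul]
    push_cast
    rw [Finset.prod_mul_distrib]
    ring
  · -- non-injective case: the determinant factor vanishes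
    obtain ⟨a, b, hab, hne⟩ : ∃ a b, r a = r b ∧ a ≠ b := by
      simp only [Function.Injective, not_forall] at hr
      obtain ⟨a, b, h1, h2⟩ := hr
      exact ⟨a, b, h1, h2⟩
    have hdet : Matrix.detRowAlternating (fun i => v (r i)) = 0 :=
      (Matrix.detRowAlternating (R := ℂ) (n := Fin m)).map_eq_zero_of_eq
        (fun i => v (r i)) (show v (r a) = v (r b) by rw [hab]) hne
    simp [hdet]
end

section
/- Let η be geometric with P(η = m) = λ^m/(1+λ)^{m+1} where λ = λ₁ + ⋯ + λᵣ with each λᵢ ≥ 0, and conditionally on η = N let (η₁,...,ηᵣ) be Multinomial(N; λ₁/λ,...,λᵣ/λ). Equivalently, let E be exponential with mean 1 and conditionally on E let η₁,...,ηᵣ be independent Poisson(λᵢE). Then these two constructions give the same joint distribution of (η₁,...,ηᵣ). -/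
/-! Integrating out the exponential mixing variable: given `E = t`, the Poisson probabilities
multiply to `e^{-λt} t^M ∏ λᵢ^{mᵢ} / ∏ mᵢ!` with `M = ∑ mᵢ`, and the Gamma integral
`∫₀^∞ t^M e^{-(1+λ)t} dt = M! / (1+λ)^{M+1}` turns this into the geometric probability of `M`
times the multinomial probability of `(m₁,…,mᵣ)` given `M`. -/

open MeasureTheory Real Finset
open scoped Nat

theorem integral_pow_mul_exp_neg_mul_Ioi {a : ℝ} (ha : 0 < a) (n : ℕ) :
    ∫ t in Set.Ioi (0 : ℝ), t ^ n * exp (-(a * t)) = n ! / a ^ (n + 1) := by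
  have h := integral_rpow_mul_exp_neg_mul_Ioi (a := n + 1) (by positivity) ha
  simp only [add_sub_cancel_right, rpow_natCast] at h
  rw [h, Gamma_nat_eq_factorial, ← Nat.cast_succ, rpow_natCast, one_div, inv_pow, inv_mul_eq_div]

theorem prod_exp_neg_mul_pow_div_factorial {ι : Type*} (s : Finset ι) (lam : ι → ℝ) (m : ι → ℕ)
    (t : ℝ) :
    ∏ i ∈ s, exp (-(lam i * t)) * (lam i * t) ^ m i / (m i)! =
      (∏ i ∈ s, lam i ^ m i) / (∏ i ∈ s, ((m i)! : ℝ)) *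
        (t ^ (∑ i ∈ s, m i) * exp (-((∑ i ∈ s, lam i) * t))) := by
  simp only [prod_div_distrib, prod_mul_distrib, mul_pow, prod_pow_eq_pow_sum, ← exp_sum,
    sum_mul, sum_neg_distrib]
  ring

theorem prod_div_pow {ι K : Type*} [Field K] (s : Finset ι) (f : ι → K) (c : K) (m : ι → ℕ) :
    ∏ i ∈ s, (f i / c) ^ m i = (∏ i ∈ s, f i ^ m i) / c ^ (∑ i ∈ s, m i) := by
  simp only [div_pow, prod_div_distrib, prod_pow_eq_pow_sum]

theorem geometric_multinomial_eq_mixed_poisson_general (r : ℕ) (lam : Fin r → ℝ)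
    (hpos : 0 < ∑ i, lam i) (m : Fin r → ℕ) :
    (∑ i, lam i) ^ (∑ i, m i) / (1 + ∑ i, lam i) ^ ((∑ i, m i) + 1) *
        ((∑ i, m i).factorial / ∏ i, ((m i).factorial : ℝ)) *
        ∏ i, (lam i / ∑ i, lam i) ^ (m i) =
      ∫ t in Set.Ioi (0 : ℝ),
        Real.exp (-t) *
          ∏ i, Real.exp (-(lam i * t)) * (lam i * t) ^ (m i) / (m i).factorial := by
  have hmixed : ∀ t : ℝ, exp (-t) * ∏ i, exp (-(lam i * t)) * (lam i * t) ^ m i / (m i)! =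
      (∏ i, lam i ^ m i) / (∏ i, ((m i)! : ℝ)) *
        (t ^ (∑ i, m i) * exp (-((1 + ∑ i, lam i) * t))) := by
    intro t
    rw [prod_exp_neg_mul_pow_div_factorial,
      show -((1 + ∑ i, lam i) * t) = -t + -((∑ i, lam i) * t) by ring, exp_add]
    ring
  have hL1 : 0 < 1 + ∑ i, lam i := by linarith
  simp only [hmixed, integral_const_mul, integral_pow_mul_exp_neg_mul_Ioi hL1, prod_div_pow]
  have hfac : ∏ i, ((m i)! : ℝ) ≠ 0 := prod_ne_zero_iff.2 fun i _ => by positivity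
  field_simp

/-- Multinomially splitting a geometric(mean λ) count into cells with
probabilities `λᵢ/λ` gives the same joint law as independent Poisson(λᵢE)
variables with a common exponential mixing variable `E`: for every outcome
`(m₁,…,mᵣ)` the two probabilities agree. -/
theorem geometric_multinomial_eq_mixed_poisson (r : ℕ) (lam : Fin r → ℝ)
    (hlam : ∀ i, 0 ≤ lam i) (hpos : 0 < ∑ i, lam i) (m : Fin r → ℕ) :
    (∑ i, lam i) ^ (∑ i, m i) / (1 + ∑ i, lam i) ^ ((∑ i, m i) + 1) *
        ((∑ i, m i).factorial / ∏ i, ((m i).factorial : ℝ)) *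
        ∏ i, (lam i / ∑ i, lam i) ^ (m i) =
      ∫ t in Set.Ioi (0 : ℝ),
        Real.exp (-t) *
          ∏ i, Real.exp (-(lam i * t)) * (lam i * t) ^ (m i) / (m i).factorial :=
  geometric_multinomial_eq_mixed_poisson_general r lam hpos m
end
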